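/- arXiv:1809.03062 — 4 statements merged into one kernel-verified Lean document; each statement's English description precedes it below -/
import Mathlib

section
/- Let H be a compact class of continuous functions on [u,v]^d uniformly bounded by D, let Y and the labels take values in [-D,D], and let the m training samples be i.i.d. copies of (X,Y). Then for every ε ∈ (0,1), with probability at least 1 − 2·Cov(H, ε/(32D))·exp(−m ε²/(128 D⁴)), the empirical risk minimizer f̂ over H satisfies E(f̂) − min_{f∈H} E(f) ≤ ε, where Cov(H, r) denotes the minimal number of closed ||·||_∞-balls of radius r needed to cover H. -/
/-!
For functions bounded by `D`, the squared loss is `4D`-Lipschitz in the uniform norm, for the true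
as well as for the empirical risk. Hence, if at every point of an `ε/(32D)`-net of `H` the empirical
risk is `ε/4`-close to the true risk, the two risks are `ε/2`-close uniformly on `H`, and an
empirical risk minimizer has excess risk at most `ε`. The empirical risk of a fixed net point is a
mean of `m` i.i.d. variables with values in `[0, 4D²]`, so Hoeffding's inequality and a union bound
over the `N` net points give the probability estimate.
-/

open MeasureTheory ProbabilityTheory Real

section Probability

variable {Ω : Type*} [MeasurableSpace Ω] {P : Measure Ω} [IsProbabilityMeasure P]

lemma ofReal_one_sub_card_mul_le {ι : Type*} [Fintype ι] {B : ι → Set Ω} {s : Set Ω} {p : ℝ}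
    (hp : 0 ≤ p) (hB : ∀ j, P (B j) ≤ ENNReal.ofReal p) (hs : ∀ᵐ ω ∂P, ω ∉ ⋃ j, B j → ω ∈ s) :
    ENNReal.ofReal (1 - Fintype.card ι * p) ≤ P s := by
  have hunion : P (⋃ j, B j) ≤ ENNReal.ofReal (Fintype.card ι * p) :=
    calc P (⋃ j, B j) ≤ ∑ j, P (B j) := measure_iUnion_fintype_le _ _
      _ ≤ Fintype.card ι • ENNReal.ofReal p := Finset.sum_le_card_nsmul _ _ _ fun j _ ↦ hB j
      _ = ENNReal.ofReal (Fintype.card ι * p) := by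
        rw [nsmul_eq_mul, ← ENNReal.ofReal_natCast, ← ENNReal.ofReal_mul (Nat.cast_nonneg _)]
  have hcompl : P sᶜ ≤ P (⋃ j, B j) := measure_mono_ae <| by
    filter_upwards [hs] with ω hω hωs
    by_contra hB
    exact hωs (hω hB)
  calc ENNReal.ofReal (1 - Fintype.card ι * p) = 1 - ENNReal.ofReal (Fintype.card ι * p) := by
        rw [ENNReal.ofReal_sub _ (by positivity), ENNReal.ofReal_one]
    _ ≤ 1 - P sᶜ := by gcongr; exact hcompl.trans hunion
    _ ≤ P s := by
        rw [tsub_le_iff_right, ← measure_univ (μ := P)]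
        exact measure_univ_le_add_compl s

lemma measureReal_sum_sub_integral_ge_le {ι : Type*} [Fintype ι] {Z : ι → Ω → ℝ}
    (hZ : ∀ i, Measurable (Z i)) (hindep : iIndepFun Z P) {a b : ℝ}
    (hab : ∀ i, ∀ᵐ ω ∂P, Z i ω ∈ Set.Icc a b) {t : ℝ} (ht : 0 ≤ t) :
    P.real {ω | t ≤ ∑ i, (Z i ω - P[Z i])}
      ≤ exp (-2 * t ^ 2 / (Fintype.card ι * (b - a) ^ 2)) := by
  have hsubG : ∀ i ∈ Finset.univ,
      HasSubgaussianMGF (fun ω ↦ Z i ω - P[Z i]) ((‖b - a‖₊ / 2) ^ 2) P :=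
    fun i _ ↦ hasSubgaussianMGF_of_mem_Icc (hZ i).aemeasurable (hab i)
  have hcentered : iIndepFun (fun i ω ↦ Z i ω - P[Z i]) P :=
    hindep.comp (fun i (y : ℝ) ↦ y - ∫ ω, Z i ω ∂P) fun _ ↦ measurable_sub_const _
  refine (HasSubgaussianMGF.measure_sum_ge_le_of_iIndepFun hcentered hsubG ht).trans_eq ?_
  congr 1
  simp only [Finset.sum_const, Finset.card_univ, nsmul_eq_mul, NNReal.coe_mul,
    NNReal.coe_natCast, NNReal.coe_pow, NNReal.coe_div, coe_nnnorm, Real.norm_eq_abs,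
    NNReal.coe_ofNat, div_pow, sq_abs]
  field_simp

lemma measure_abs_sum_sub_integral_ge_le {ι : Type*} [Fintype ι] {Z : ι → Ω → ℝ}
    (hZ : ∀ i, Measurable (Z i)) (hindep : iIndepFun Z P) {a b : ℝ}
    (hab : ∀ i, ∀ᵐ ω ∂P, Z i ω ∈ Set.Icc a b) {t : ℝ} (ht : 0 ≤ t) :
    P {ω | t ≤ |∑ i, (Z i ω - P[Z i])|}
      ≤ ENNReal.ofReal (2 * exp (-2 * t ^ 2 / (Fintype.card ι * (b - a) ^ 2))) := by
  set e := exp (-2 * t ^ 2 / (Fintype.card ι * (b - a) ^ 2))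
  have hupper := measureReal_sum_sub_integral_ge_le hZ hindep hab ht
  have hlower : P.real {ω | t ≤ ∑ i, (-Z i ω - ∫ ω, -Z i ω ∂P)} ≤ e := by
    have := measureReal_sum_sub_integral_ge_le (Z := fun i ω ↦ -Z i ω) (a := -b) (b := -a)
      (fun i ↦ (hZ i).neg) (hindep.comp (fun _ (y : ℝ) ↦ -y) fun _ ↦ measurable_neg)
      (fun i ↦ by filter_upwards [hab i] with ω hω using ⟨neg_le_neg hω.2, neg_le_neg hω.1⟩) ht
    rwa [show -a - -b = b - a by ring] at this
  have hsplit : {ω | t ≤ |∑ i, (Z i ω - P[Z i])|} ⊆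
      {ω | t ≤ ∑ i, (Z i ω - P[Z i])} ∪ {ω | t ≤ ∑ i, (-Z i ω - ∫ ω, -Z i ω ∂P)} := by
    intro ω (hω : t ≤ |_|)
    have hneg : ∑ i, (-Z i ω - ∫ ω, -Z i ω ∂P) = -∑ i, (Z i ω - P[Z i]) := by
      rw [← Finset.sum_neg_distrib]
      exact Finset.sum_congr rfl fun i _ ↦ by rw [integral_neg]; ring
    rcases le_abs'.1 hω with h | h
    · exact Or.inr (show t ≤ _ by linarith)
    · exact Or.inl h
  calc P _ ≤ P _ + P _ := (measure_mono hsplit).trans (measure_union_le _ _)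
    _ ≤ ENNReal.ofReal e + ENNReal.ofReal e := by
      rw [← ofReal_measureReal, ← ofReal_measureReal]
      gcongr
    _ = ENNReal.ofReal (2 * e) := by
      rw [← ENNReal.ofReal_add (by positivity) (by positivity), two_mul]

lemma measure_abs_empiricalMean_sub_ge_le {β : Type*} [MeasurableSpace β] {m : ℕ}
    {W : Ω → β} {Wi : Fin m → Ω → β} (hWi : ∀ i, Measurable (Wi i)) (hindep : iIndepFun Wi P)
    (hident : ∀ i, IdentDistrib (Wi i) W P P) {g : β → ℝ} (hg : Measurable g) {a b : ℝ}
    (hgab : ∀ ω, g (W ω) ∈ Set.Icc a b) {t : ℝ} (ht : 0 ≤ t) :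
    P {ω | t ≤ |(1 / (m : ℝ)) * ∑ i, g (Wi i ω) - ∫ ω, g (W ω) ∂P|}
      ≤ ENNReal.ofReal (2 * exp (-2 * m * t ^ 2 / (b - a) ^ 2)) := by
  rcases Nat.eq_zero_or_pos m with rfl | hm
  · simpa using prob_le_one.trans (by norm_num : (1 : ENNReal) ≤ 2)
  have hmean : ∀ i, ∫ ω, g (Wi i ω) ∂P = ∫ ω, g (W ω) ∂P := fun i ↦ ((hident i).comp hg).integral_eq
  have hsum := measure_abs_sum_sub_integral_ge_le (Z := fun i ω ↦ g (Wi i ω)) (a := a) (b := b)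
    (fun i ↦ hg.comp (hWi i)) (hindep.comp (fun _ ↦ g) fun _ ↦ hg)
    (fun i ↦ ((hident i).comp hg).symm.ae_mem_snd measurableSet_Icc (ae_of_all _ hgab))
    (t := m * t) (by positivity)
  have hm' : (m : ℝ) ≠ 0 := by positivity
  refine (measure_mono fun ω hω ↦ ?_).trans (hsum.trans_eq ?_)
  · have hscale : ∑ i, (g (Wi i ω) - ∫ ω, g (Wi i ω) ∂P)
        = m * ((1 / (m : ℝ)) * ∑ i, g (Wi i ω) - ∫ ω, g (W ω) ∂P) := by
      simp only [hmean, Finset.sum_sub_distrib, Finset.sum_const, Finset.card_univ,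
        Fintype.card_fin, nsmul_eq_mul]
      field_simp
    change m * t ≤ |∑ i, (g (Wi i ω) - ∫ ω, g (Wi i ω) ∂P)|
    rw [hscale, abs_mul, Nat.abs_cast]
    exact mul_le_mul_of_nonneg_left hω (Nat.cast_nonneg m)
  · rw [Fintype.card_fin, show -2 * ((m : ℝ) * t) ^ 2 = m * (-2 * m * t ^ 2) by ring,
      mul_div_mul_left _ _ hm']

end Probability

section ExcessRisk

variable {F ι : Type*} {H : Set F} {R R' : F → ℝ}

lemma abs_sub_le_of_net {c : ι → F} {δ η : ℝ}
    (hnet : ∀ f ∈ H, ∃ j, |R f - R (c j)| ≤ δ ∧ |R' f - R' (c j)| ≤ δ)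
    (hc : ∀ j, |R (c j) - R' (c j)| ≤ η) {f : F} (hf : f ∈ H) :
    |R f - R' f| ≤ 2 * δ + η := by
  obtain ⟨j, hR, hR'⟩ := hnet f hf
  calc |R f - R' f| = |(R f - R (c j)) + (R (c j) - R' (c j)) - (R' f - R' (c j))| := by ring_nf
    _ ≤ |R f - R (c j)| + |R (c j) - R' (c j)| + |R' f - R' (c j)| :=
        (abs_sub _ _).trans (add_le_add_left (abs_add_le _ _) _)
    _ ≤ 2 * δ + η := by linarith [hc j]

lemma sub_le_of_forall_abs_sub_le {δ : ℝ} (hdev : ∀ f ∈ H, |R f - R' f| ≤ δ) {f₁ f₂ : F}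
    (hf₁ : f₁ ∈ H) (hf₂ : f₂ ∈ H) (hmin : R' f₁ ≤ R' f₂) : R f₁ - R f₂ ≤ 2 * δ := by
  have h₁ := abs_le.1 (hdev f₁ hf₁)
  have h₂ := abs_le.1 (hdev f₂ hf₂)
  linarith [h₁.2, h₂.1]

end ExcessRisk

section LeastSquares

variable {α Ω : Type*} [MeasurableSpace Ω]

noncomputable def risk (P : Measure Ω) (X : Ω → α) (Y : Ω → ℝ) (f : α → ℝ) : ℝ :=
  ∫ ω, (f (X ω) - Y ω) ^ 2 ∂P

noncomputable def empiricalRisk {m : ℕ} (x : Fin m → α) (y : Fin m → ℝ) (f : α → ℝ) : ℝ :=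
  (1 / (m : ℝ)) * ∑ i, (f (x i) - y i) ^ 2

lemma abs_sq_sub_sub_sq_sub_le {a b y D r : ℝ} (ha : |a| ≤ D) (hb : |b| ≤ D) (hy : |y| ≤ D)
    (hab : |a - b| ≤ r) : |(a - y) ^ 2 - (b - y) ^ 2| ≤ 4 * D * r := by
  have hsum : |(a - y) + (b - y)| ≤ 4 * D := by
    rw [abs_le] at ha hb hy ⊢
    constructor <;> linarith
  calc |(a - y) ^ 2 - (b - y) ^ 2| = |a - b| * |(a - y) + (b - y)| := by
        rw [← abs_mul]; ring_nf
    _ ≤ r * (4 * D) := mul_le_mul hab hsum (abs_nonneg _) ((abs_nonneg _).trans hab)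
    _ = 4 * D * r := by ring

variable {P : Measure Ω} {X : Ω → α} {Y : Ω → ℝ} {S : Set α} {D r : ℝ} {f g : α → ℝ}

lemma integrable_sq_sub [MeasurableSpace α] [IsFiniteMeasure P] (hX : Measurable X)
    (hY : Measurable Y) (hf : Measurable f) (hXS : ∀ ω, X ω ∈ S) (hYD : ∀ ω, |Y ω| ≤ D)
    (hfD : ∀ x ∈ S, |f x| ≤ D) : Integrable (fun ω ↦ (f (X ω) - Y ω) ^ 2) P := by
  refine .of_bound (by fun_prop) ((2 * D) ^ 2) (ae_of_all _ fun ω ↦ ?_)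
  rw [Real.norm_eq_abs, abs_pow]
  gcongr
  linarith [abs_sub (f (X ω)) (Y ω), hfD _ (hXS ω), hYD ω]

lemma abs_risk_sub_risk_le [IsProbabilityMeasure P]
    (hfi : Integrable (fun ω ↦ (f (X ω) - Y ω) ^ 2) P)
    (hgi : Integrable (fun ω ↦ (g (X ω) - Y ω) ^ 2) P) (hXS : ∀ ω, X ω ∈ S)
    (hYD : ∀ ω, |Y ω| ≤ D) (hfD : ∀ x ∈ S, |f x| ≤ D) (hgD : ∀ x ∈ S, |g x| ≤ D)
    (hfg : ∀ x ∈ S, |f x - g x| ≤ r) : |risk P X Y f - risk P X Y g| ≤ 4 * D * r := by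
  rw [risk, risk, ← integral_sub hfi hgi]
  simpa using norm_integral_le_of_norm_le_const
    (f := fun ω ↦ (f (X ω) - Y ω) ^ 2 - (g (X ω) - Y ω) ^ 2) (ae_of_all P fun ω ↦
    abs_sq_sub_sub_sq_sub_le (hfD _ (hXS ω)) (hgD _ (hXS ω)) (hYD ω) (hfg _ (hXS ω)))

lemma abs_empiricalRisk_sub_empiricalRisk_le {m : ℕ} {x : Fin m → α} {y : Fin m → ℝ}
    (hD : 0 ≤ D) (hr : 0 ≤ r) (hxS : ∀ i, x i ∈ S) (hyD : ∀ i, |y i| ≤ D)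
    (hfD : ∀ x ∈ S, |f x| ≤ D) (hgD : ∀ x ∈ S, |g x| ≤ D) (hfg : ∀ x ∈ S, |f x - g x| ≤ r) :
    |empiricalRisk x y f - empiricalRisk x y g| ≤ 4 * D * r := by
  have hterm : ∀ i, |(f (x i) - y i) ^ 2 - (g (x i) - y i) ^ 2| ≤ 4 * D * r := fun i ↦
    abs_sq_sub_sub_sq_sub_le (hfD _ (hxS i)) (hgD _ (hxS i)) (hyD i) (hfg _ (hxS i))
  rw [empiricalRisk, empiricalRisk, ← mul_sub, ← Finset.sum_sub_distrib, abs_mul,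
    abs_of_nonneg (by positivity)]
  calc 1 / (m : ℝ) * |∑ i, ((f (x i) - y i) ^ 2 - (g (x i) - y i) ^ 2)|
      ≤ 1 / (m : ℝ) * (m * (4 * D * r)) := by
        gcongr
        refine (Finset.abs_sum_le_sum_abs _ _).trans ?_
        simpa using Finset.sum_le_sum fun i (_ : i ∈ Finset.univ) ↦ hterm i
    _ ≤ 4 * D * r := by
        rcases Nat.eq_zero_or_pos m with rfl | hm
        · rw [Nat.cast_zero, zero_mul, mul_zero]
          positivity
        · rw [← mul_assoc, one_div_mul_cancel (Nat.cast_pos.2 hm).ne', one_mul]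

variable [MeasurableSpace α] [IsProbabilityMeasure P]

lemma measure_abs_empiricalRisk_sub_risk_ge_le {m : ℕ} {Xi : Fin m → Ω → α}
    {Yi : Fin m → Ω → ℝ} (hXi : ∀ i, Measurable (Xi i)) (hYi : ∀ i, Measurable (Yi i))
    (hindep : iIndepFun (fun i ω ↦ (Xi i ω, Yi i ω)) P)
    (hident : ∀ i, IdentDistrib (fun ω ↦ (Xi i ω, Yi i ω)) (fun ω ↦ (X ω, Y ω)) P P)
    (hXS : ∀ ω, X ω ∈ S) (hYD : ∀ ω, |Y ω| ≤ D) (hf : Measurable f) (hfD : ∀ x ∈ S, |f x| ≤ D)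
    {t : ℝ} (ht : 0 ≤ t) :
    P {ω | t ≤ |empiricalRisk (Xi · ω) (Yi · ω) f - risk P X Y f|}
      ≤ ENNReal.ofReal (2 * exp (-(m * t ^ 2) / (8 * D ^ 4))) := by
  have hloss : ∀ ω, (f (X ω) - Y ω) ^ 2 ∈ Set.Icc 0 (4 * D ^ 2) := fun ω ↦
    ⟨sq_nonneg _, by nlinarith [abs_le.1 (hfD _ (hXS ω)), abs_le.1 (hYD ω)]⟩
  refine (measure_abs_empiricalMean_sub_ge_le (fun i ↦ (hXi i).prodMk (hYi i)) hindep hident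
    (g := fun p ↦ (f p.1 - p.2) ^ 2) (((hf.comp measurable_fst).sub measurable_snd).pow_const 2)
    hloss ht).trans_eq ?_
  ring_nf

lemma abs_risk_sub_empiricalRisk_le_of_net (hX : Measurable X) (hY : Measurable Y)
    (hXS : ∀ ω, X ω ∈ S) (hYD : ∀ ω, |Y ω| ≤ D) (hD : 0 ≤ D) {H : Set (α → ℝ)}
    (hHmeas : ∀ f ∈ H, Measurable f) (hHD : ∀ f ∈ H, ∀ x ∈ S, |f x| ≤ D) {ι : Type*}
    {c : ι → α → ℝ} (hc : ∀ j, c j ∈ H) (hr : 0 ≤ r)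
    (hcover : ∀ f ∈ H, ∃ j, ∀ x ∈ S, |f x - c j x| ≤ r) {m : ℕ} {x : Fin m → α}
    {y : Fin m → ℝ} (hxS : ∀ i, x i ∈ S) (hyD : ∀ i, |y i| ≤ D) {η : ℝ}
    (hnet : ∀ j, |risk P X Y (c j) - empiricalRisk x y (c j)| ≤ η) (hf : f ∈ H) :
    |risk P X Y f - empiricalRisk x y f| ≤ 2 * (4 * D * r) + η := by
  refine abs_sub_le_of_net (fun f hf ↦ ?_) hnet hf
  obtain ⟨j, hj⟩ := hcover f hf
  exact ⟨j, abs_risk_sub_risk_le (integrable_sq_sub hX hY (hHmeas f hf) hXS hYD (hHD f hf))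
      (integrable_sq_sub hX hY (hHmeas _ (hc j)) hXS hYD (hHD _ (hc j))) hXS hYD (hHD f hf)
      (hHD _ (hc j)) hj,
    abs_empiricalRisk_sub_empiricalRisk_le hD hr hxS hyD (hHD f hf) (hHD _ (hc j)) hj⟩

end LeastSquares

theorem generalization_error_bound_general
    {Ω : Type*} [MeasurableSpace Ω] (P : Measure Ω) [IsProbabilityMeasure P]
    (u v : ℝ) (d m : ℕ) (D : ℝ) (hD : 1 ≤ D) (ε : ℝ) (hε : ε ∈ Set.Ioo (0:ℝ) 1)
    (X : Ω → (Fin d → ℝ)) (Y : Ω → ℝ)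
    (hX : Measurable X) (hY : Measurable Y)
    (hXrange : ∀ ω, X ω ∈ Set.Icc (fun _ => u) (fun _ => v))
    (hYrange : ∀ ω, |Y ω| ≤ D)
    -- the m training samples, i.i.d. with the law of (X, Y)
    (Xi : Fin m → Ω → (Fin d → ℝ)) (Yi : Fin m → Ω → ℝ)
    (hXi : ∀ i, Measurable (Xi i)) (hYi : ∀ i, Measurable (Yi i))
    (hIndep : ProbabilityTheory.iIndepFun
      (fun i ω => (Xi i ω, Yi i ω)) P)
    (hIdent : ∀ i, P.map (fun ω => (Xi i ω, Yi i ω)) = P.map (fun ω => (X ω, Y ω)))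
    -- the hypothesis class: measurable (continuous) functions uniformly bounded by D
    (H : Set ((Fin d → ℝ) → ℝ))
    (hHmeas : ∀ f ∈ H, Measurable f)
    (hHbdd : ∀ f ∈ H, ∀ x ∈ Set.Icc (fun _ => u) (fun _ => v : Fin d → ℝ), |f x| ≤ D)
    -- a cover of H of cardinality N by uniform-norm balls of radius ε/(32 D)
    (N : ℕ) (c : Fin N → ((Fin d → ℝ) → ℝ)) (hc : ∀ j, c j ∈ H)
    (hcover : ∀ f ∈ H, ∃ j,
      ∀ x ∈ Set.Icc (fun _ => u) (fun _ => v : Fin d → ℝ), |f x - c j x| ≤ ε / (32 * D))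
    -- the risk minimizer over H
    (fH : (Fin d → ℝ) → ℝ) (hfH : fH ∈ H)
    -- the (measurable) empirical risk minimizer
    (fhat : Ω → ((Fin d → ℝ) → ℝ))
    (hfhatH : ∀ ω, fhat ω ∈ H)
    (hfhatmin : ∀ ω, ∀ f ∈ H,
      (1 / (m : ℝ)) * ∑ i, (fhat ω (Xi i ω) - Yi i ω) ^ 2
        ≤ (1 / (m : ℝ)) * ∑ i, (f (Xi i ω) - Yi i ω) ^ 2) :
    ENNReal.ofReal (1 - 2 * N * Real.exp (-(m * ε ^ 2) / (128 * D ^ 4)))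
      ≤ P {ω | (∫ ω', (fhat ω (X ω') - Y ω') ^ 2 ∂P)
                - (∫ ω', (fH (X ω') - Y ω') ^ 2 ∂P) ≤ ε} := by
  set S := Set.Icc (fun _ => u) (fun _ => v : Fin d → ℝ)
  set e := Real.exp (-(m * ε ^ 2) / (128 * D ^ 4)) with he
  set bad : Fin N → Set Ω := fun j ↦
    {ω | ε / 4 ≤ |empiricalRisk (Xi · ω) (Yi · ω) (c j) - risk P X Y (c j)|}
  have hD0 : 0 < D := by linarith
  have hε0 : 0 < ε := hε.1
  have hident : ∀ i, IdentDistrib (fun ω ↦ (Xi i ω, Yi i ω)) (fun ω ↦ (X ω, Y ω)) P P :=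
    fun i ↦ ⟨((hXi i).prodMk (hYi i)).aemeasurable, (hX.prodMk hY).aemeasurable, hIdent i⟩
  -- The samples inherit the range of `(X, Y)` only almost surely, through their common law.
  have hsample : ∀ᵐ ω ∂P, ∀ i, Xi i ω ∈ S ∧ |Yi i ω| ≤ D := by
    refine ae_all_iff.2 fun i ↦ ?_
    filter_upwards [(hident i).symm.ae_mem_snd (measurableSet_Icc.prod measurableSet_Icc)
      (ae_of_all _ fun ω ↦ ⟨hXrange ω, abs_le.1 (hYrange ω)⟩)] with ω hω
    exact ⟨hω.1, abs_le.2 hω.2⟩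
  have hbad : ∀ j, P (bad j) ≤ ENNReal.ofReal (2 * e) := fun j ↦
    (measure_abs_empiricalRisk_sub_risk_ge_le hXi hYi hIndep hident hXrange hYrange
      (hHmeas _ (hc j)) (hHbdd _ (hc j)) (by positivity)).trans_eq (by rw [he]; ring_nf)
  have hgood : ∀ᵐ ω ∂P, ω ∉ ⋃ j, bad j → risk P X Y (fhat ω) - risk P X Y fH ≤ ε := by
    filter_upwards [hsample] with ω hsampleω hω
    have hnet (j : Fin N) :
        |risk P X Y (c j) - empiricalRisk (Xi · ω) (Yi · ω) (c j)| ≤ ε / 4 := by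
      rw [abs_sub_comm]
      exact (not_le.1 fun h ↦ hω (Set.mem_iUnion.2 ⟨j, h⟩)).le
    have hdev := fun f (hf : f ∈ H) ↦ abs_risk_sub_empiricalRisk_le_of_net hX hY hXrange
      hYrange hD0.le hHmeas hHbdd hc (by positivity) hcover (fun i ↦ (hsampleω i).1)
      (fun i ↦ (hsampleω i).2) hnet hf
    have hr : 4 * D * (ε / (32 * D)) = ε / 8 := by field_simp; ring
    have := sub_le_of_forall_abs_sub_le hdev (hfhatH ω) hfH (hfhatmin ω fH hfH)
    linarith
  calc ENNReal.ofReal (1 - 2 * N * e) = ENNReal.ofReal (1 - Fintype.card (Fin N) * (2 * e)) := by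
        rw [Fintype.card_fin]; ring_nf
    _ ≤ _ := ofReal_one_sub_card_mul_le (by positivity) hbad hgood

/-- Generalization error bound via covering numbers: with probability at
least `1 - 2 N exp(-m ε² / (128 D⁴))`, where `N` bounds the `ε/(32D)`-covering number of the
hypothesis class `H` in the uniform norm, the empirical risk minimizer `f̂` satisfies
`E(f̂) - min_{f ∈ H} E(f) ≤ ε`. -/
theorem generalization_error_bound
    {Ω : Type*} [MeasurableSpace Ω] (P : Measure Ω) [IsProbabilityMeasure P]
    (u v : ℝ) (huv : u < v) (d m : ℕ) (D : ℝ) (hD : 1 ≤ D) (ε : ℝ) (hε : ε ∈ Set.Ioo (0:ℝ) 1)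
    (X : Ω → (Fin d → ℝ)) (Y : Ω → ℝ)
    (hX : Measurable X) (hY : Measurable Y)
    (hXrange : ∀ ω, X ω ∈ Set.Icc (fun _ => u) (fun _ => v))
    (hYrange : ∀ ω, |Y ω| ≤ D)
    -- the m training samples, i.i.d. with the law of (X, Y)
    (Xi : Fin m → Ω → (Fin d → ℝ)) (Yi : Fin m → Ω → ℝ)
    (hXi : ∀ i, Measurable (Xi i)) (hYi : ∀ i, Measurable (Yi i))
    (hIndep : ProbabilityTheory.iIndepFun
      (fun i ω => (Xi i ω, Yi i ω)) P)
    (hIdent : ∀ i, P.map (fun ω => (Xi i ω, Yi i ω)) = P.map (fun ω => (X ω, Y ω)))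
    -- the hypothesis class: measurable (continuous) functions uniformly bounded by D
    (H : Set ((Fin d → ℝ) → ℝ)) (hHne : H.Nonempty)
    (hHmeas : ∀ f ∈ H, Measurable f)
    (hHbdd : ∀ f ∈ H, ∀ x ∈ Set.Icc (fun _ => u) (fun _ => v : Fin d → ℝ), |f x| ≤ D)
    -- a cover of H of cardinality N by uniform-norm balls of radius ε/(32 D)
    (N : ℕ) (c : Fin N → ((Fin d → ℝ) → ℝ)) (hc : ∀ j, c j ∈ H)
    (hcover : ∀ f ∈ H, ∃ j,
      ∀ x ∈ Set.Icc (fun _ => u) (fun _ => v : Fin d → ℝ), |f x - c j x| ≤ ε / (32 * D))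
    -- the risk minimizer over H
    (fH : (Fin d → ℝ) → ℝ) (hfH : fH ∈ H)
    (hfHmin : ∀ f ∈ H,
      (∫ ω, (fH (X ω) - Y ω) ^ 2 ∂P) ≤ ∫ ω, (f (X ω) - Y ω) ^ 2 ∂P)
    -- the (measurable) empirical risk minimizer
    (fhat : Ω → ((Fin d → ℝ) → ℝ))
    (hfhatH : ∀ ω, fhat ω ∈ H)
    (hfhatmin : ∀ ω, ∀ f ∈ H,
      (1 / (m : ℝ)) * ∑ i, (fhat ω (Xi i ω) - Yi i ω) ^ 2
        ≤ (1 / (m : ℝ)) * ∑ i, (f (Xi i ω) - Yi i ω) ^ 2)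
    (hfhatriskMeas : Measurable (fun ω => ∫ ω', (fhat ω (X ω') - Y ω') ^ 2 ∂P)) :
    ENNReal.ofReal (1 - 2 * N * Real.exp (-(m * ε ^ 2) / (128 * D ^ 4)))
      ≤ P {ω | (∫ ω', (fhat ω (X ω') - Y ω') ^ 2 ∂P)
                - (∫ ω', (fH (X ω') - Y ω') ^ 2 ∂P) ≤ ε} :=
  generalization_error_bound_general P u v d m D hD ε hε X Y hX hY hXrange hYrange Xi Yi hXi hYi
    hIndep hIdent H hHmeas hHbdd N c hc hcover fH hfH fhat hfhatH hfhatmin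
end

section
/- Let a = (a_0, a_1, ..., a_L) be a ReLU network architecture with a_0 = d, let R ≥ 1, and let F^{u,v}(θ) denote the function on [u,v]^d realized by the parametrization θ (all weights and biases bounded by R in absolute value). Then for all parametrizations θ, η with ||θ||_∞, ||η||_∞ ≤ R, the uniform norm of the difference of realizations satisfies ||F^{u,v}(θ) − F^{u,v}(η)||_{L^∞([u,v]^d)} ≤ 2·max{1,|u|,|v|}·L²·R^{L−1}·(max_l a_l)^L·||θ − η||_∞. -/
set_option maxHeartbeats 1200000


/-- Hidden states of a ReLU network: `reluHid a θ s x` is the output after `s` affine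
layers, with componentwise ReLU applied after each of them. -/
def reluHid (a : ℕ → ℕ)
    (θ : ∀ l : ℕ, Matrix (Fin (a (l + 1))) (Fin (a l)) ℝ × (Fin (a (l + 1)) → ℝ)) :
    (s : ℕ) → (Fin (a 0) → ℝ) → Fin (a s) → ℝ
  | 0, x => x
  | s + 1, x => fun i => max ((θ s).1.mulVec (reluHid a θ s x) i + (θ s).2 i) 0

/-- Realization of a ReLU network with `s + 1` affine layers (architecture
`(a 0, a 1, …, a (s+1))`): ReLU is applied between consecutive affine layers but not
after the last one. -/
def reluRealize (a : ℕ → ℕ)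
    (θ : ∀ l : ℕ, Matrix (Fin (a (l + 1))) (Fin (a l)) ℝ × (Fin (a (l + 1)) → ℝ))
    (s : ℕ) (x : Fin (a 0) → ℝ) : Fin (a (s + 1)) → ℝ :=
  fun i => (θ s).1.mulVec (reluHid a θ s x) i + (θ s).2 i

/-- Lipschitz continuity of the realization map of ReLU networks with
respect to the parameters: for architecture `a = (a 0, …, a L)` with `L = K + 1` layers,
parameter bound `R ≥ 1`, and parametrizations `θ, η` with entrywise distance at most `r`,
`‖F^{u,v}(θ) - F^{u,v}(η)‖_{L^∞([u,v]^d)} ≤ 2 max{1,|u|,|v|} L² R^{L-1} ‖a‖_∞^L r`. -/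
theorem reluRealize_lipschitz_in_parameters
    (u v : ℝ) (huv : u < v) (K : ℕ) (a : ℕ → ℕ) (A : ℕ)
    (hA : ∀ l ≤ K + 1, a l ≤ A)
    (θ η : ∀ l : ℕ, Matrix (Fin (a (l + 1))) (Fin (a l)) ℝ × (Fin (a (l + 1)) → ℝ))
    (R : ℝ) (hR : 1 ≤ R)
    (hθ : ∀ l ≤ K, (∀ i j, |(θ l).1 i j| ≤ R) ∧ (∀ i, |(θ l).2 i| ≤ R))
    (hη : ∀ l ≤ K, (∀ i j, |(η l).1 i j| ≤ R) ∧ (∀ i, |(η l).2 i| ≤ R))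
    (r : ℝ)
    (hr : ∀ l ≤ K, (∀ i j, |(θ l).1 i j - (η l).1 i j| ≤ r) ∧
      (∀ i, |(θ l).2 i - (η l).2 i| ≤ r)) :
    ∀ x : Fin (a 0) → ℝ, (∀ j, x j ∈ Set.Icc u v) →
      ∀ i, |reluRealize a θ K x i - reluRealize a η K x i|
        ≤ 2 * max 1 (max |u| |v|) * ((K : ℝ) + 1) ^ 2 * R ^ K * (A : ℝ) ^ (K + 1) * r := by
  intro x hx i₀
  set M : ℝ := max 1 (max |u| |v|) with hMdef
  have hM1 : (1:ℝ) ≤ M := le_max_left _ _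
  have hM0 : (0:ℝ) ≤ M := zero_le_one.trans hM1
  have hR0 : (0:ℝ) ≤ R := zero_le_one.trans hR
  have hr0 : (0:ℝ) ≤ r := (abs_nonneg _).trans ((hr K le_rfl).2 i₀)
  have hA1 : (1:ℝ) ≤ (A:ℝ) := by
    have h1 : 0 < a (K+1) := i₀.pos
    have h2 : a (K+1) ≤ A := hA (K+1) le_rfl
    exact_mod_cast Nat.one_le_iff_ne_zero.mpr (by omega)
  have hA0 : (0:ℝ) ≤ (A:ℝ) := zero_le_one.trans hA1
  have hxM : ∀ j, |x j| ≤ M := by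
    intro j
    rcases hx j with ⟨h1, h2⟩
    exact (abs_le_max_abs_abs h1 h2).trans (le_max_right _ _)
  -- generic bound on a sum of products
  have sumB : ∀ (n : ℕ) (c d : Fin n → ℝ) (C D : ℝ), 0 ≤ C → 0 ≤ D →
      (∀ j, |c j| ≤ C) → (∀ j, |d j| ≤ D) → |∑ j, c j * d j| ≤ (n:ℝ) * (C * D) := by
    intro n c d C D hC hD hc hd
    calc |∑ j, c j * d j| ≤ ∑ j, |c j * d j| := Finset.abs_sum_le_sum_abs _ _
      _ ≤ ∑ _j : Fin n, C * D := by
          refine Finset.sum_le_sum fun j _ => ?_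
          rw [abs_mul]
          exact mul_le_mul (hc j) (hd j) (abs_nonneg _) hC
      _ = (n:ℝ) * (C * D) := by simp [Finset.sum_const, Finset.card_univ, mul_comm]
  -- bound on hidden states
  have Hb : ∀ (ζ : ∀ l : ℕ, Matrix (Fin (a (l + 1))) (Fin (a l)) ℝ × (Fin (a (l + 1)) → ℝ)),
      (∀ l ≤ K, (∀ i j, |(ζ l).1 i j| ≤ R) ∧ (∀ i, |(ζ l).2 i| ≤ R)) →
      ∀ s, s ≤ K → ∀ i, |reluHid a ζ s x i| ≤ ((s:ℝ)+1) * M * R^s * (A:ℝ)^s := by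
    intro ζ hζ s
    induction s with
    | zero => intro _ i; simpa [reluHid] using hxM i
    | succ s ih =>
      intro hs i
      have hs' : s ≤ K := Nat.le_of_succ_le hs
      have hB : (0:ℝ) ≤ ((s:ℝ)+1) * M * R^s * (A:ℝ)^s := by positivity
      have h1 : |reluHid a ζ (s+1) x i| ≤ |(ζ s).1.mulVec (reluHid a ζ s x) i + (ζ s).2 i| := by
        show |max _ 0| ≤ _
        rw [abs_of_nonneg (le_max_right _ _)]
        exact max_le (le_abs_self _) (abs_nonneg _)
      have h2 : |(ζ s).1.mulVec (reluHid a ζ s x) i| ≤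
          (a s : ℝ) * (R * (((s:ℝ)+1) * M * R^s * (A:ℝ)^s)) := by
        have := sumB (a s) (fun j => (ζ s).1 i j) (reluHid a ζ s x) R
          (((s:ℝ)+1) * M * R^s * (A:ℝ)^s) hR0 hB (fun j => (hζ s hs').1 i j) (ih hs')
        simpa [Matrix.mulVec, dotProduct] using this
      have h3 : |(ζ s).2 i| ≤ R := (hζ s hs').2 i
      have haA : (a s : ℝ) ≤ (A:ℝ) := by exact_mod_cast hA s (by omega)
      have hRs : R ≤ R^(s+1) := le_self_pow₀ hR (by omega)
      have hApow : (1:ℝ) ≤ (A:ℝ)^(s+1) := by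
        simpa using pow_le_pow_left₀ zero_le_one hA1 (s+1)
      have hpow1 : (1:ℝ) ≤ M * (A:ℝ)^(s+1) := by
        have := mul_le_mul hM1 hApow zero_le_one hM0
        linarith
      calc |reluHid a ζ (s+1) x i|
          ≤ |(ζ s).1.mulVec (reluHid a ζ s x) i| + |(ζ s).2 i| :=
            h1.trans (abs_add_le _ _)
        _ ≤ (A:ℝ) * (R * (((s:ℝ)+1) * M * R^s * (A:ℝ)^s)) + R := by
            have := mul_le_mul_of_nonneg_right haA
              (by positivity : (0:ℝ) ≤ R * (((s:ℝ)+1) * M * R^s * (A:ℝ)^s))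
            linarith [h2, h3]
        _ = ((s:ℝ)+1) * M * R^(s+1) * (A:ℝ)^(s+1) + R := by ring
        _ ≤ ((s:ℝ)+1) * M * R^(s+1) * (A:ℝ)^(s+1) + M * (A:ℝ)^(s+1) * R^(s+1) := by
            nlinarith [hRs, hpow1, pow_nonneg hR0 (s+1)]
        _ = (((s:ℝ)+1) + 1) * M * R^(s+1) * (A:ℝ)^(s+1) := by ring
        _ = ((((s+1):ℕ):ℝ)+1) * M * R^(s+1) * (A:ℝ)^(s+1) := by push_cast; ring
  -- key affine-layer estimate
  have key : ∀ s, s ≤ K →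
      (∀ i, |reluHid a θ s x i - reluHid a η s x i|
        ≤ 2 * M * (s:ℝ)^2 * R^(s-1) * (A:ℝ)^s * r) →
      ∀ i : Fin (a (s+1)),
        |((θ s).1.mulVec (reluHid a θ s x) i + (θ s).2 i)
          - ((η s).1.mulVec (reluHid a η s x) i + (η s).2 i)|
        ≤ 2 * M * ((s:ℝ)+1)^2 * R^s * (A:ℝ)^(s+1) * r := by
    intro s hs hd i
    have hB : (0:ℝ) ≤ ((s:ℝ)+1) * M * R^s * (A:ℝ)^s := by positivity
    have hD : (0:ℝ) ≤ 2 * M * (s:ℝ)^2 * R^(s-1) * (A:ℝ)^s * r := by positivity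
    have decomp : (θ s).1.mulVec (reluHid a θ s x) i + (θ s).2 i
        - ((η s).1.mulVec (reluHid a η s x) i + (η s).2 i)
        = (∑ j, ((θ s).1 i j - (η s).1 i j) * reluHid a θ s x j)
          + (∑ j, (η s).1 i j * (reluHid a θ s x j - reluHid a η s x j))
          + ((θ s).2 i - (η s).2 i) := by
      have hsum : ∀ j, ((θ s).1 i j - (η s).1 i j) * reluHid a θ s x j
          + (η s).1 i j * (reluHid a θ s x j - reluHid a η s x j)
          = (θ s).1 i j * reluHid a θ s x j - (η s).1 i j * reluHid a η s x j :=
        fun j => by ring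
      simp only [Matrix.mulVec, dotProduct, ← Finset.sum_add_distrib, hsum,
        Finset.sum_sub_distrib]
      ring
    have h1 : |∑ j, ((θ s).1 i j - (η s).1 i j) * reluHid a θ s x j|
        ≤ (a s : ℝ) * (r * (((s:ℝ)+1) * M * R^s * (A:ℝ)^s)) :=
      sumB _ _ _ _ _ hr0 hB (fun j => (hr s hs).1 i j) (Hb θ hθ s hs)
    have h2 : |∑ j, (η s).1 i j * (reluHid a θ s x j - reluHid a η s x j)|
        ≤ (a s : ℝ) * (R * (2 * M * (s:ℝ)^2 * R^(s-1) * (A:ℝ)^s * r)) :=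
      sumB _ _ _ _ _ hR0 hD (fun j => (hη s hs).1 i j) hd
    have h3 : |(θ s).2 i - (η s).2 i| ≤ r := (hr s hs).2 i
    have haA : (a s : ℝ) ≤ (A:ℝ) := by exact_mod_cast hA s (by omega)
    have hRR : (s:ℝ)^2 * (R * R^(s-1)) ≤ (s:ℝ)^2 * R^s := by
      cases s with
      | zero => simp
      | succ n =>
        rw [Nat.succ_sub_one]
        exact le_of_eq (by rw [← pow_succ'])
    have hone : (1:ℝ) ≤ M * R^s * (A:ℝ)^(s+1) := by
      have h5 : (1:ℝ) ≤ R^s := by simpa using pow_le_pow_left₀ zero_le_one hR s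
      have h6 : (1:ℝ) ≤ (A:ℝ)^(s+1) := by simpa using pow_le_pow_left₀ zero_le_one hA1 (s+1)
      have h7 : (1:ℝ)*1 ≤ M * R^s := mul_le_mul hM1 h5 zero_le_one hM0
      have h8 : (M*R^s)*1 ≤ (M*R^s) * (A:ℝ)^(s+1) :=
        mul_le_mul le_rfl h6 zero_le_one (by positivity)
      nlinarith
    have hP : (0:ℝ) ≤ M * R^s * (A:ℝ)^(s+1) * r := by positivity
    have hsP : (0:ℝ) ≤ (s:ℝ) * (M * R^s * (A:ℝ)^(s+1) * r) := by positivity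
    calc |((θ s).1.mulVec (reluHid a θ s x) i + (θ s).2 i)
          - ((η s).1.mulVec (reluHid a η s x) i + (η s).2 i)|
        ≤ (a s : ℝ) * (r * (((s:ℝ)+1) * M * R^s * (A:ℝ)^s))
          + (a s : ℝ) * (R * (2 * M * (s:ℝ)^2 * R^(s-1) * (A:ℝ)^s * r)) + r := by
          rw [decomp]
          refine (abs_add_le _ _).trans ?_
          exact add_le_add ((abs_add_le _ _).trans (add_le_add h1 h2)) h3
      _ ≤ (A:ℝ) * (r * (((s:ℝ)+1) * M * R^s * (A:ℝ)^s))
          + (A:ℝ) * (R * (2 * M * (s:ℝ)^2 * R^(s-1) * (A:ℝ)^s * r)) + r := by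
          have hc1 : (0:ℝ) ≤ r * (((s:ℝ)+1) * M * R^s * (A:ℝ)^s) := by positivity
          have hc2 : (0:ℝ) ≤ R * (2 * M * (s:ℝ)^2 * R^(s-1) * (A:ℝ)^s * r) := by positivity
          have := mul_le_mul_of_nonneg_right haA hc1
          have := mul_le_mul_of_nonneg_right haA hc2
          linarith
      _ ≤ ((s:ℝ)+1) * (M * R^s * (A:ℝ)^(s+1) * r)
          + 2 * (s:ℝ)^2 * (M * R^s * (A:ℝ)^(s+1) * r)
          + (M * R^s * (A:ℝ)^(s+1) * r) := by
          have e1 : (A:ℝ) * (r * (((s:ℝ)+1) * M * R^s * (A:ℝ)^s))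
              = ((s:ℝ)+1) * (M * R^s * (A:ℝ)^(s+1) * r) := by ring
          have e2 : (A:ℝ) * (R * (2 * M * (s:ℝ)^2 * R^(s-1) * (A:ℝ)^s * r))
              = 2 * M * ((s:ℝ)^2 * (R * R^(s-1))) * (A:ℝ)^(s+1) * r := by ring
          have e3 : 2 * M * ((s:ℝ)^2 * (R * R^(s-1))) * (A:ℝ)^(s+1) * r
              ≤ 2 * (s:ℝ)^2 * (M * R^s * (A:ℝ)^(s+1) * r) := by
            have h := mul_le_mul_of_nonneg_right hRR
              (by positivity : (0:ℝ) ≤ 2 * M * ((A:ℝ)^(s+1) * r))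
            nlinarith
          have e4 : r ≤ M * R^s * (A:ℝ)^(s+1) * r :=
            le_mul_of_one_le_left hr0 hone |>.trans_eq (by ring)
          rw [e1, e2]
          linarith [e3, e4]
      _ ≤ 2 * ((s:ℝ)+1)^2 * (M * R^s * (A:ℝ)^(s+1) * r) := by
          have hkey : 2 * ((s:ℝ)+1)^2 * (M * R^s * (A:ℝ)^(s+1) * r)
              - (((s:ℝ)+1) * (M * R^s * (A:ℝ)^(s+1) * r)
                + 2 * (s:ℝ)^2 * (M * R^s * (A:ℝ)^(s+1) * r)
                + (M * R^s * (A:ℝ)^(s+1) * r))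
              = 3 * ((s:ℝ) * (M * R^s * (A:ℝ)^(s+1) * r)) := by ring
          linarith [hsP, hkey]
      _ = 2 * M * ((s:ℝ)+1)^2 * R^s * (A:ℝ)^(s+1) * r := by ring
  -- difference of hidden states
  have Hdiff : ∀ s, s ≤ K → ∀ i, |reluHid a θ s x i - reluHid a η s x i|
      ≤ 2 * M * (s:ℝ)^2 * R^(s-1) * (A:ℝ)^s * r := by
    intro s
    induction s with
    | zero => intro _ i; simp [reluHid]
    | succ s ih =>
      intro hs i
      have hs' : s ≤ K := Nat.le_of_succ_le hs
      have hk := key s hs' (ih hs') i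
      have contr : |reluHid a θ (s+1) x i - reluHid a η (s+1) x i|
          ≤ |((θ s).1.mulVec (reluHid a θ s x) i + (θ s).2 i)
            - ((η s).1.mulVec (reluHid a η s x) i + (η s).2 i)| := by
        show |max _ 0 - max _ 0| ≤ _
        exact abs_max_sub_max_le_abs _ _ _
      refine contr.trans (hk.trans ?_)
      rw [Nat.succ_sub_one]
      push_cast
      exact le_rfl
  exact key K le_rfl (Hdiff K le_rfl) i₀
end

section
/- With the notation of the Lipschitz estimate for ReLU networks: for parametrizations θ, η of architecture a with all entries bounded by R ≥ 1, the following refined bound holds: ||F^{u,v}(θ) − F^{u,v}(η)||_{L^∞} ≤ [ m·L·R^{L−1}·||a||_∞^L + Σ_{l=1}^{L} l·(R·||a||_∞)^{l−1} ]·||θ − η||_∞, where m = max{1,|u|,|v|} and L is the number of layers. -/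
noncomputable def MbAux (m R : ℝ) (A : ℕ) (s : ℕ) : ℝ :=
  m * (R * A) ^ s + R * ∑ j ∈ Finset.range s, (R * A) ^ j

noncomputable def DbAux (m R r : ℝ) (A : ℕ) (s : ℕ) : ℝ :=
  (m * s * R ^ (s - 1) * (A : ℝ) ^ s + ∑ l ∈ Finset.range s, ((l : ℝ) + 1) * (R * A) ^ l) * r

lemma cast_mul_pow_pred (R : ℝ) (s : ℕ) : (s : ℝ) * R ^ (s - 1) * R = s * R ^ s := by
  cases s with
  | zero => simp
  | succ n => simp [pow_succ, mul_assoc]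

lemma sum_geom_shift (R : ℝ) (A : ℕ) (s : ℕ) :
    ∑ j ∈ Finset.range (s + 1), (R * A) ^ j
      = (∑ j ∈ Finset.range s, (R * A) ^ j) * (R * (A : ℝ)) + 1 := by
  rw [Finset.sum_range_succ', Finset.sum_mul]
  simp [pow_succ]

lemma sum_lin_shift (R : ℝ) (A : ℕ) (s : ℕ) :
    ∑ l ∈ Finset.range (s + 1), ((l : ℝ) + 1) * (R * A) ^ l
      = (∑ l ∈ Finset.range s, ((l : ℝ) + 1) * (R * A) ^ l) * (R * (A : ℝ))
        + ((∑ j ∈ Finset.range s, (R * A) ^ j) * (R * (A : ℝ)) + 1) := by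
  rw [Finset.sum_range_succ', Finset.sum_mul, Finset.sum_mul, ← add_assoc,
    ← Finset.sum_add_distrib]
  congr 1
  · apply Finset.sum_congr rfl
    intro l hl
    push_cast
    ring
  · norm_num

lemma MbAux_succ (m R : ℝ) (A : ℕ) (s : ℕ) :
    MbAux m R A (s + 1) = A * (R * MbAux m R A s) + R := by
  simp only [MbAux, sum_geom_shift]
  ring

lemma DbAux_succ (m R r : ℝ) (A : ℕ) (s : ℕ) :
    DbAux m R r A (s + 1) = A * (R * DbAux m R r A s + r * MbAux m R A s) + r := by
  simp only [DbAux, MbAux, Nat.add_sub_cancel, sum_lin_shift]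
  have h2 := cast_mul_pow_pred R s
  push_cast
  linear_combination (-(m * r * (A : ℝ) ^ s * A)) * h2

lemma dot_mag_bound {n A : ℕ} (hn : n ≤ A) (w h : Fin n → ℝ) (b : ℝ)
    (R M : ℝ) (hR : 0 ≤ R) (hM : 0 ≤ M)
    (hw : ∀ j, |w j| ≤ R) (hb : |b| ≤ R) (hh : ∀ j, |h j| ≤ M) :
    |(∑ j, w j * h j) + b| ≤ A * (R * M) + R := by
  have hA' : (n : ℝ) ≤ A := by exact_mod_cast hn
  calc |(∑ j, w j * h j) + b| ≤ |∑ j, w j * h j| + |b| := abs_add_le _ _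
    _ ≤ (∑ j, |w j * h j|) + R := by
        gcongr; exact Finset.abs_sum_le_sum_abs _ _
    _ ≤ (∑ _j : Fin n, R * M) + R := by
        gcongr with j
        rw [abs_mul]
        exact mul_le_mul (hw j) (hh j) (abs_nonneg _) hR
    _ = n * (R * M) + R := by
        rw [Finset.sum_const, Finset.card_univ, Fintype.card_fin, nsmul_eq_mul]
    _ ≤ A * (R * M) + R := by
        have : 0 ≤ R * M := by positivity
        nlinarith

lemma dot_diff_bound {n A : ℕ} (hn : n ≤ A) (w w' h h' : Fin n → ℝ) (b b' : ℝ)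
    (R r D M : ℝ) (hR : 0 ≤ R) (hr : 0 ≤ r) (hD : 0 ≤ D) (hM : 0 ≤ M)
    (hw : ∀ j, |w j| ≤ R) (hwd : ∀ j, |w j - w' j| ≤ r) (hb : |b - b'| ≤ r)
    (hh : ∀ j, |h j - h' j| ≤ D) (hh' : ∀ j, |h' j| ≤ M) :
    |((∑ j, w j * h j) + b) - ((∑ j, w' j * h' j) + b')| ≤ A * (R * D + r * M) + r := by
  have hA' : (n : ℝ) ≤ A := by exact_mod_cast hn
  have e : ((∑ j, w j * h j) + b) - ((∑ j, w' j * h' j) + b')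
      = (∑ j, (w j * h j - w' j * h' j)) + (b - b') := by
    rw [Finset.sum_sub_distrib]; ring
  rw [e]
  calc |(∑ j, (w j * h j - w' j * h' j)) + (b - b')|
      ≤ |∑ j, (w j * h j - w' j * h' j)| + |b - b'| := abs_add_le _ _
    _ ≤ (∑ j, |w j * h j - w' j * h' j|) + r := by
        gcongr; exact Finset.abs_sum_le_sum_abs _ _
    _ ≤ (∑ _j : Fin n, (R * D + r * M)) + r := by
        gcongr with j
        have e2 : w j * h j - w' j * h' j = w j * (h j - h' j) + (w j - w' j) * h' j := by
          ring
        rw [e2]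
        calc |w j * (h j - h' j) + (w j - w' j) * h' j|
            ≤ |w j * (h j - h' j)| + |(w j - w' j) * h' j| := abs_add_le _ _
          _ ≤ R * D + r * M := by
              rw [abs_mul, abs_mul]
              gcongr <;> first | exact hw j | exact hh j | exact hwd j | exact hh' j
    _ = n * (R * D + r * M) + r := by
        rw [Finset.sum_const, Finset.card_univ, Fintype.card_fin, nsmul_eq_mul]
    _ ≤ A * (R * D + r * M) + r := by
        have : 0 ≤ R * D + r * M := by positivity
        nlinarith

lemma abs_relu_le (c : ℝ) : |max c 0| ≤ |c| := by
  have := abs_max_sub_max_le_abs c 0 0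
  simpa using this

lemma abs_relu_sub_relu (c d : ℝ) : |max c 0 - max d 0| ≤ |c - d| :=
  abs_max_sub_max_le_abs c d 0

/-- Refined Lipschitz estimate for ReLU networks with respect to
parameters: with `m = max{1,|u|,|v|}`, `L = K + 1` layers, parameter bound `R ≥ 1` and
architecture bounded by `‖a‖_∞ ≤ A`,
`‖F^{u,v}(θ) - F^{u,v}(η)‖_{L^∞} ≤ [m L R^{L-1} ‖a‖_∞^L + Σ_{l=1}^{L} l (R ‖a‖_∞)^{l-1}] ‖θ-η‖_∞`. -/
theorem reluRealize_lipschitz_in_parameters_refined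
    (u v : ℝ) (huv : u < v) (K : ℕ) (a : ℕ → ℕ) (A : ℕ)
    (hA : ∀ l ≤ K + 1, a l ≤ A)
    (θ η : ∀ l : ℕ, Matrix (Fin (a (l + 1))) (Fin (a l)) ℝ × (Fin (a (l + 1)) → ℝ))
    (R : ℝ) (hR : 1 ≤ R)
    (hθ : ∀ l ≤ K, (∀ i j, |(θ l).1 i j| ≤ R) ∧ (∀ i, |(θ l).2 i| ≤ R))
    (hη : ∀ l ≤ K, (∀ i j, |(η l).1 i j| ≤ R) ∧ (∀ i, |(η l).2 i| ≤ R))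
    (r : ℝ)
    (hr : ∀ l ≤ K, (∀ i j, |(θ l).1 i j - (η l).1 i j| ≤ r) ∧
      (∀ i, |(θ l).2 i - (η l).2 i| ≤ r)) :
    ∀ x : Fin (a 0) → ℝ, (∀ j, x j ∈ Set.Icc u v) →
      ∀ i, |reluRealize a θ K x i - reluRealize a η K x i|
        ≤ (max 1 (max |u| |v|) * ((K : ℝ) + 1) * R ^ K * (A : ℝ) ^ (K + 1)
            + ∑ l ∈ Finset.range (K + 1), ((l : ℝ) + 1) * (R * (A : ℝ)) ^ l) * r := by
  intro x hx i
  set m := max 1 (max |u| |v|) with hm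
  have hm1 : (1 : ℝ) ≤ m := le_max_left _ _
  have hm0 : (0 : ℝ) ≤ m := by linarith
  have hR0 : (0 : ℝ) ≤ R := by linarith
  have hr0 : (0 : ℝ) ≤ r := le_trans (abs_nonneg _) ((hr K le_rfl).2 i)
  have hRA : (0 : ℝ) ≤ R * (A : ℝ) := mul_nonneg hR0 (Nat.cast_nonneg A)
  have hMb0 : ∀ s, 0 ≤ MbAux m R A s := fun s =>
    add_nonneg (mul_nonneg hm0 (pow_nonneg hRA s))
      (mul_nonneg hR0 (Finset.sum_nonneg fun j _ => pow_nonneg hRA j))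
  have hDb0 : ∀ s, 0 ≤ DbAux m R r A s := fun s =>
    mul_nonneg (add_nonneg
      (mul_nonneg (mul_nonneg (mul_nonneg hm0 (Nat.cast_nonneg s)) (pow_nonneg hR0 _))
        (pow_nonneg (Nat.cast_nonneg A) s))
      (Finset.sum_nonneg fun l _ =>
        mul_nonneg (by positivity) (pow_nonneg hRA l))) hr0
  have key : ∀ s, s ≤ K →
      (∀ j, |reluHid a η s x j| ≤ MbAux m R A s) ∧
      (∀ j, |reluHid a θ s x j - reluHid a η s x j| ≤ DbAux m R r A s) := by
    intro s
    induction s with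
    | zero =>
      intro _
      constructor
      · intro j
        have h1 : |x j| ≤ max |u| |v| := abs_le_max_abs_abs (hx j).1 (hx j).2
        have h2 : max |u| |v| ≤ m := le_max_right _ _
        simp only [reluHid, MbAux]
        simp only [pow_zero, Finset.range_zero, Finset.sum_empty, mul_zero, mul_one, add_zero]
        exact h1.trans h2
      · intro j
        simp [reluHid, DbAux]
    | succ s ih =>
      intro hs
      have hsK : s ≤ K := Nat.le_of_succ_le hs
      obtain ⟨ihM, ihD⟩ := ih hsK
      have han : a s ≤ A := hA s (by omega)
      constructor
      · intro j
        show |max ((η s).1.mulVec (reluHid a η s x) j + (η s).2 j) 0| ≤ _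
        refine le_trans (abs_relu_le _) ?_
        rw [MbAux_succ]
        simp only [Matrix.mulVec, dotProduct]
        exact dot_mag_bound han _ _ _ R (MbAux m R A s) hR0 (hMb0 s)
          (fun k => (hη s hsK).1 j k) ((hη s hsK).2 j) ihM
      · intro j
        show |max ((θ s).1.mulVec (reluHid a θ s x) j + (θ s).2 j) 0
            - max ((η s).1.mulVec (reluHid a η s x) j + (η s).2 j) 0| ≤ _
        refine le_trans (abs_relu_sub_relu _ _) ?_
        rw [DbAux_succ]
        simp only [Matrix.mulVec, dotProduct]
        exact dot_diff_bound han _ _ _ _ _ _ R r (DbAux m R r A s) (MbAux m R A s)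
          hR0 hr0 (hDb0 s) (hMb0 s)
          (fun k => (hθ s hsK).1 j k) (fun k => (hr s hsK).1 j k) ((hr s hsK).2 j)
          ihD ihM
  obtain ⟨hM, hD⟩ := key K le_rfl
  have main : |reluRealize a θ K x i - reluRealize a η K x i| ≤ DbAux m R r A (K + 1) := by
    show |((θ K).1.mulVec (reluHid a θ K x) i + (θ K).2 i)
        - ((η K).1.mulVec (reluHid a η K x) i + (η K).2 i)| ≤ _
    rw [DbAux_succ]
    simp only [Matrix.mulVec, dotProduct]
    exact dot_diff_bound (hA K (by omega)) _ _ _ _ _ _ R r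
      (DbAux m R r A K) (MbAux m R A K) hR0 hr0 (hDb0 K) (hMb0 K)
      (fun k => (hθ K le_rfl).1 i k) (fun k => (hr K le_rfl).1 i k) ((hr K le_rfl).2 i)
      hD hM
  refine main.trans_eq ?_
  simp only [DbAux, Nat.add_sub_cancel]
  push_cast
  ring
end

section
/- The r-covering number of the class of ReLU networks on [u,v]^d with architecture a and parameter bound R ≥ 1 satisfies ln Cov(N_{a,R}^{u,v}, r) ≤ P(a)·[ ln( 4·L(a)²·max{1,|u|,|v|} / r ) + L(a)·ln( R·||a||_∞ ) ], where P(a) = Σ_l (a_l a_{l−1} + a_l) is the number of parameters and L(a) the number of layers. The same bound holds for the class of clipped networks {C_D ∘ g : g ∈ N_{a,R}^{u,v}}. -/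
/-- The clipping function `C_D(x) = min{|x|, D}·sgn(x)`. -/
noncomputable def clipFun (D x : ℝ) : ℝ := min |x| D * Real.sign x
section Aux

private lemma sum_abs_le_relu {n : ℕ} (f : Fin n → ℝ) (c : ℝ) (hf : ∀ i, |f i| ≤ c) :
    |∑ i, f i| ≤ (n : ℝ) * c := by
  calc |∑ i, f i| ≤ ∑ i, |f i| := Finset.abs_sum_le_sum_abs _ _
    _ ≤ ∑ _i : Fin n, c := Finset.sum_le_sum fun i _ => hf i
    _ = (n : ℝ) * c := by simp [mul_comm]

private lemma affine_abs_bound {n q : ℕ} (A : Matrix (Fin q) (Fin n) ℝ) (b : Fin q → ℝ)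
    (h : Fin n → ℝ) (R M W : ℝ) (hA : ∀ i i', |A i i'| ≤ R) (hb : ∀ i, |b i| ≤ R)
    (hh : ∀ i', |h i'| ≤ M) (hn : (n : ℝ) ≤ W) (hM : 0 ≤ M) (hR : 0 ≤ R) (i : Fin q) :
    |A.mulVec h i + b i| ≤ W * (R * M) + R := by
  have h1 : |A.mulVec h i| ≤ (n : ℝ) * (R * M) := by
    have : A.mulVec h i = ∑ i', A i i' * h i' := by
      simp [Matrix.mulVec, dotProduct]
    rw [this]
    exact sum_abs_le_relu _ _ fun i' => by
      rw [abs_mul]; exact mul_le_mul (hA i i') (hh i') (abs_nonneg _) hR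
  have hRM : 0 ≤ R * M := mul_nonneg hR hM
  calc |A.mulVec h i + b i| ≤ |A.mulVec h i| + |b i| := abs_add_le _ _
    _ ≤ (n : ℝ) * (R * M) + R := add_le_add h1 (hb i)
    _ ≤ W * (R * M) + R := by nlinarith

private lemma reluHid_abs_bound (a : ℕ → ℕ)
    (θ : ∀ l : ℕ, Matrix (Fin (a (l + 1))) (Fin (a l)) ℝ × (Fin (a (l + 1)) → ℝ))
    (R W B : ℝ) (hR : 1 ≤ R) (hW : 1 ≤ W) (hB : 1 ≤ B)
    (x : Fin (a 0) → ℝ) (hx : ∀ i, |x i| ≤ B) :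
    ∀ s : ℕ,
      (∀ l, l < s → (a l : ℝ) ≤ W ∧ (∀ i i', |(θ l).1 i i'| ≤ R) ∧ (∀ i, |(θ l).2 i| ≤ R)) →
      ∀ i, |reluHid a θ s x i| ≤ (R * W) ^ s * (B + s) := by
  intro s
  induction s with
  | zero => intro _ i; simpa [reluHid] using hx i
  | succ s ih =>
    intro hp i
    have hRW : (1 : ℝ) ≤ R * W := by nlinarith
    have hpow : (1 : ℝ) ≤ (R * W) ^ s := one_le_pow₀ hRW
    obtain ⟨haW, hA, hb⟩ := hp s (Nat.lt_succ_self s)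
    have ihh := ih (fun l hl => hp l (hl.trans (Nat.lt_succ_self s)))
    have hM : (0 : ℝ) ≤ (R * W) ^ s * (B + s) := by positivity
    have key := affine_abs_bound (θ s).1 (θ s).2 (reluHid a θ s x)
      R ((R * W) ^ s * (B + s)) W hA hb ihh haW hM (by linarith) i
    have habs : |reluHid a θ (s + 1) x i|
        ≤ |(θ s).1.mulVec (reluHid a θ s x) i + (θ s).2 i| := by
      simp only [reluHid]
      rw [abs_of_nonneg (le_max_right _ 0)]
      exact max_le (le_abs_self _) (abs_nonneg _)
    have h1 : R ≤ (R * W) ^ (s + 1) := by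
      rw [pow_succ]; nlinarith
    have h2 : (R * W) ^ (s + 1) * (B + s) = W * (R * ((R * W) ^ s * (B + s))) := by
      rw [pow_succ]; ring
    have hfin : W * (R * ((R * W) ^ s * (B + s))) + R ≤ (R * W) ^ (s + 1) * (B + (s:ℝ) + 1) := by
      nlinarith
    calc |reluHid a θ (s + 1) x i| ≤ _ := habs.trans key
      _ ≤ (R * W) ^ (s + 1) * (B + (s:ℝ) + 1) := hfin
      _ = (R * W) ^ (s + 1) * (B + ((s + 1 : ℕ) : ℝ)) := by push_cast; ring

private lemma affine_diff_bound {n q : ℕ}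
    (A A' : Matrix (Fin q) (Fin n) ℝ) (b b' : Fin q → ℝ) (h h' : Fin n → ℝ)
    (R W δ G M : ℝ) (hRpos : 0 < R) (hG : 0 ≤ G) (hδ : 0 ≤ δ) (hM : 0 ≤ M)
    (hA : ∀ i i', |A i i'| ≤ R)
    (hd : ∀ i', R * |h i' - h' i'| ≤ G)
    (hh' : ∀ i', |h' i'| ≤ M)
    (hAd : ∀ i i', |A i i' - A' i i'| ≤ δ)
    (hbd : ∀ i, |b i - b' i| ≤ δ)
    (hn : (n : ℝ) ≤ W) (i : Fin q) :
    |(A.mulVec h i + b i) - (A'.mulVec h' i + b' i)| ≤ W * (G + δ * M) + δ := by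
  have key : |A.mulVec h i - A'.mulVec h' i| ≤ (n : ℝ) * (G + δ * M) := by
    have hrw : A.mulVec h i - A'.mulVec h' i = ∑ i', (A i i' * h i' - A' i i' * h' i') := by
      simp [Matrix.mulVec, dotProduct, Finset.sum_sub_distrib]
    rw [hrw]
    apply sum_abs_le_relu
    intro i'
    have hsplit : A i i' * h i' - A' i i' * h' i'
        = A i i' * (h i' - h' i') + (A i i' - A' i i') * h' i' := by ring
    rw [hsplit]
    have t1 : |A i i' * (h i' - h' i')| ≤ G := by
      rw [abs_mul]
      have hdi : |h i' - h' i'| ≤ G / R := by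
        rw [le_div_iff₀ hRpos]; linarith [hd i']
      calc |A i i'| * |h i' - h' i'| ≤ R * (G / R) :=
            mul_le_mul (hA i i') hdi (abs_nonneg _) hRpos.le
        _ = G := by field_simp
    have t2 : |(A i i' - A' i i') * h' i'| ≤ δ * M := by
      rw [abs_mul]; exact mul_le_mul (hAd i i') (hh' i') (abs_nonneg _) hδ
    calc |A i i' * (h i' - h' i') + (A i i' - A' i i') * h' i'|
        ≤ |A i i' * (h i' - h' i')| + |(A i i' - A' i i') * h' i'| := abs_add_le _ _
      _ ≤ G + δ * M := add_le_add t1 t2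
  have hGM : 0 ≤ G + δ * M := by positivity
  calc |(A.mulVec h i + b i) - (A'.mulVec h' i + b' i)|
      = |(A.mulVec h i - A'.mulVec h' i) + (b i - b' i)| := by congr 1; ring
    _ ≤ |A.mulVec h i - A'.mulVec h' i| + |b i - b' i| := abs_add_le _ _
    _ ≤ (n : ℝ) * (G + δ * M) + δ := add_le_add key (hbd i)
    _ ≤ W * (G + δ * M) + δ := by nlinarith

private lemma relu_step_arith (R W B δ : ℝ) (s : ℕ) (hR : 1 ≤ R) (hW : 1 ≤ W)
    (hB : 1 ≤ B) (hδ : 0 ≤ δ) :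
    R * (W * (δ * (s : ℝ) * (R * W) ^ s * (B + s) + δ * ((R * W) ^ s * (B + s))) + δ)
      ≤ δ * ((s : ℝ) + 1) * (R * W) ^ (s + 1) * (B + s + 1) := by
  have hRW : (1 : ℝ) ≤ R * W := by nlinarith
  have hpow : (1 : ℝ) ≤ (R * W) ^ s := one_le_pow₀ hRW
  have h1 : R ≤ (R * W) ^ (s + 1) := by rw [pow_succ]; nlinarith
  have hs1 : (1 : ℝ) ≤ (s : ℝ) + 1 := by
    have : (0:ℝ) ≤ (s:ℝ) := Nat.cast_nonneg s
    linarith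
  have h3 : R ≤ ((s : ℝ) + 1) * (R * W) ^ (s + 1) := by nlinarith
  have h2 : R * δ ≤ δ * (((s : ℝ) + 1) * (R * W) ^ (s + 1)) := by nlinarith
  calc R * (W * (δ * (s : ℝ) * (R * W) ^ s * (B + s) + δ * ((R * W) ^ s * (B + s))) + δ)
      = δ * ((s : ℝ) + 1) * (R * W) ^ (s + 1) * (B + s) + R * δ := by rw [pow_succ]; ring
    _ ≤ δ * ((s : ℝ) + 1) * (R * W) ^ (s + 1) * (B + s)
          + δ * (((s : ℝ) + 1) * (R * W) ^ (s + 1)) := by linarith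
    _ = δ * ((s : ℝ) + 1) * (R * W) ^ (s + 1) * (B + s + 1) := by ring

private lemma reluHid_diff_bound (a : ℕ → ℕ)
    (θ θ' : ∀ l : ℕ, Matrix (Fin (a (l + 1))) (Fin (a l)) ℝ × (Fin (a (l + 1)) → ℝ))
    (R W B δ : ℝ) (hR : 1 ≤ R) (hW : 1 ≤ W) (hB : 1 ≤ B) (hδ : 0 ≤ δ)
    (x : Fin (a 0) → ℝ) (hx : ∀ i, |x i| ≤ B) :
    ∀ s : ℕ,
      (∀ l, l < s → (a l : ℝ) ≤ W
        ∧ (∀ i i', |(θ l).1 i i'| ≤ R) ∧ (∀ i, |(θ l).2 i| ≤ R)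
        ∧ (∀ i i', |(θ' l).1 i i'| ≤ R) ∧ (∀ i, |(θ' l).2 i| ≤ R)
        ∧ (∀ i i', |(θ l).1 i i' - (θ' l).1 i i'| ≤ δ)
        ∧ (∀ i, |(θ l).2 i - (θ' l).2 i| ≤ δ)) →
      ∀ i, R * |reluHid a θ s x i - reluHid a θ' s x i|
        ≤ δ * (s : ℝ) * (R * W) ^ s * (B + s) := by
  intro s
  induction s with
  | zero => intro _ i; simp [reluHid]
  | succ s ih =>
    intro hp i
    obtain ⟨haW, hA, hb, hA', hb', hAd, hbd⟩ := hp s (Nat.lt_succ_self s)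
    have hps := fun l (hl : l < s) => hp l (hl.trans (Nat.lt_succ_self s))
    have ihd := ih hps
    have hmag' := reluHid_abs_bound a θ' R W B hR hW hB x hx s
      (fun l hl => ⟨(hps l hl).1, (hps l hl).2.2.2.1, (hps l hl).2.2.2.2.1⟩)
    have hs0 : (0:ℝ) ≤ (s:ℝ) := Nat.cast_nonneg s
    have hRW : (1 : ℝ) ≤ R * W := by nlinarith
    have hpow : (1 : ℝ) ≤ (R * W) ^ s := one_le_pow₀ hRW
    have hG : 0 ≤ δ * (s : ℝ) * (R * W) ^ s * (B + s) :=
      mul_nonneg (mul_nonneg (mul_nonneg hδ hs0) (by linarith)) (by linarith)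
    have hM : 0 ≤ (R * W) ^ s * (B + (s:ℝ)) :=
      mul_nonneg (by linarith) (by linarith)
    have key := affine_diff_bound (θ s).1 (θ' s).1 (θ s).2 (θ' s).2
      (reluHid a θ s x) (reluHid a θ' s x) R W δ
      (δ * (s : ℝ) * (R * W) ^ s * (B + s)) ((R * W) ^ s * (B + s))
      (by linarith) hG hδ hM hA ihd hmag' hAd hbd haW i
    have hmax : |reluHid a θ (s + 1) x i - reluHid a θ' (s + 1) x i|
        ≤ |((θ s).1.mulVec (reluHid a θ s x) i + (θ s).2 i)
            - ((θ' s).1.mulVec (reluHid a θ' s x) i + (θ' s).2 i)| := by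
      simp only [reluHid]
      exact abs_max_sub_max_le_abs _ _ 0
    have step := relu_step_arith R W B δ s hR hW hB hδ
    calc R * |reluHid a θ (s + 1) x i - reluHid a θ' (s + 1) x i|
        ≤ R * (W * (δ * (s : ℝ) * (R * W) ^ s * (B + s)
            + δ * ((R * W) ^ s * (B + s))) + δ) :=
          mul_le_mul_of_nonneg_left (hmax.trans key) (by linarith)
      _ ≤ δ * ((s : ℝ) + 1) * (R * W) ^ (s + 1) * (B + s + 1) := step
      _ = δ * ((s + 1 : ℕ) : ℝ) * (R * W) ^ (s + 1) * (B + ((s + 1 : ℕ) : ℝ)) := by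
          push_cast; ring

private lemma clip_lip (D : ℝ) (hD : 0 ≤ D) (x y : ℝ) :
    |clipFun D x - clipFun D y| ≤ |x - y| := by
  have hrep : ∀ t : ℝ, clipFun D t = max (min t D) (-D) := by
    intro t
    rcases lt_trichotomy t 0 with h | h | h
    · rw [clipFun, Real.sign_of_neg h, abs_of_neg h, mul_neg_one,
        min_eq_left (show t ≤ D by linarith)]
      rcases le_total (-t) D with h' | h'
      · rw [min_eq_left h', max_eq_left (by linarith), neg_neg]
      · rw [min_eq_right h', max_eq_right (by linarith)]
    · subst h
      simp [clipFun, Real.sign_zero, min_eq_left hD, max_eq_left (neg_nonpos.mpr hD)]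
    · rw [clipFun, Real.sign_of_pos h, abs_of_pos h, mul_one]
      have h0 : 0 ≤ min t D := le_min h.le hD
      rw [max_eq_left (by linarith)]
  rw [hrep x, hrep y]
  calc |max (min x D) (-D) - max (min y D) (-D)| ≤ |min x D - min y D| :=
        abs_max_sub_max_le_abs _ _ _
    _ ≤ max |x - y| |D - D| := abs_min_sub_min_le_max _ _ _ _
    _ = |x - y| := by simp

end Aux

set_option maxHeartbeats 2000000 in
/-- Covering number of ReLU network hypothesis classes: the class
`N_{a,R}^{u,v}` of realizations on `[u,v]^d` of ReLU networks of architecture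
`a = (a 0, …, a (K+1))` (with `a 0 = d`, `a (K+1) = 1`, `L(a) = K + 1` layers) and
parameters bounded by `R ≥ 1` admits, for `r ∈ (0,1)`, a cover by `N` uniform-norm balls
of radius `r` with
`ln N ≤ P(a) [ ln(4 L(a)² max{1,|u|,|v|} / r) + L(a) ln(R ‖a‖_∞) ]`,
and the same cover works for the clipped class `{C_D ∘ g : g ∈ N_{a,R}^{u,v}}`. -/
theorem covering_number_relu_networks
    (u v : ℝ) (huv : u < v) (K : ℕ) (a : ℕ → ℕ) (haL : a (K + 1) = 1)
    (R D r : ℝ) (hR : 1 ≤ R) (hD : 1 ≤ D) (hr : r ∈ Set.Ioo (0:ℝ) 1) :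
    ∃ (N : ℕ)
      (c : Fin N → ∀ l : ℕ, Matrix (Fin (a (l + 1))) (Fin (a l)) ℝ × (Fin (a (l + 1)) → ℝ)),
      (∀ j, ∀ l ≤ K, (∀ i i', |((c j) l).1 i i'| ≤ R) ∧ (∀ i, |((c j) l).2 i| ≤ R)) ∧
      (∀ θ : ∀ l : ℕ, Matrix (Fin (a (l + 1))) (Fin (a l)) ℝ × (Fin (a (l + 1)) → ℝ),
        (∀ l ≤ K, (∀ i i', |(θ l).1 i i'| ≤ R) ∧ (∀ i, |(θ l).2 i| ≤ R)) →
        ∃ j, ∀ x : Fin (a 0) → ℝ, (∀ i, x i ∈ Set.Icc u v) →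
          (∀ i, |reluRealize a θ K x i - reluRealize a (c j) K x i| ≤ r) ∧
          (∀ i, |clipFun D (reluRealize a θ K x i)
                  - clipFun D (reluRealize a (c j) K x i)| ≤ r)) ∧
      Real.log N
        ≤ (∑ l ∈ Finset.range (K + 1), ((a (l + 1) * a l + a (l + 1) : ℕ) : ℝ))
          * (Real.log (4 * ((K : ℝ) + 1) ^ 2 * max 1 (max |u| |v|) / r)
              + ((K : ℝ) + 1) * Real.log (R * ((Finset.range (K + 2)).sup a : ℕ))) := by
  classical
  obtain ⟨hr0, hr1⟩ := hr
  set B : ℝ := max 1 (max |u| |v|) with hBdef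
  have hB : 1 ≤ B := le_max_left _ _
  set Wn : ℕ := (Finset.range (K + 2)).sup a with hWndef
  set W : ℝ := (Wn : ℝ) with hWdef
  have haW : ∀ l, l < K + 2 → (a l : ℝ) ≤ W := by
    intro l hl
    exact_mod_cast Nat.cast_le.mpr (Finset.le_sup (f := a) (Finset.mem_range.mpr hl))
  have hW : 1 ≤ W := by
    have h := haW (K + 1) (by omega)
    rw [haL] at h
    exact_mod_cast h
  have hK0 : (0:ℝ) ≤ (K:ℝ) := Nat.cast_nonneg K
  have hRW : (1:ℝ) ≤ R * W := by nlinarith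
  have hpowK : (1:ℝ) ≤ (R * W) ^ K := one_le_pow₀ hRW
  have hpowK1 : (1:ℝ) ≤ (R * W) ^ (K + 1) := one_le_pow₀ hRW
  set Q : ℝ := ((K:ℝ) + 1) * W * (R * W) ^ K * (B + ((K:ℝ) + 1)) with hQdef
  set δ : ℝ := r / Q with hδdef
  set m : ℕ := ⌈R / δ⌉₊ + 1 with hmdef
  set p : ℕ → ℝ := fun k => min (-R + (2 * (k:ℝ) + 1) * δ) R with hpdef
  set ridx : ℝ → ℕ := fun t => min ⌊(t + R) / (2 * δ)⌋₊ (m - 1) with hridxdef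
  clear_value B Wn W Q δ m p ridx
  have hQpos : 0 < Q := by
    rw [hQdef]
    apply mul_pos (mul_pos (mul_pos (by linarith) (by linarith)) (by linarith))
    linarith
  have hδpos : 0 < δ := by
    rw [hδdef]; exact div_pos hr0 hQpos
  have hpabs : ∀ k, |p k| ≤ R := by
    intro k
    simp only [hpdef]
    rw [abs_le]
    refine ⟨le_min ?_ (by linarith), min_le_right _ _⟩
    have : (0:ℝ) ≤ (k:ℝ) := Nat.cast_nonneg k
    nlinarith
  have hridx_lt : ∀ t, ridx t < m := by
    intro t
    have h1 : ridx t ≤ m - 1 := by simp only [hridxdef]; exact min_le_right _ _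
    omega
  have hgrid : ∀ t, |t| ≤ R → |t - p (ridx t)| ≤ δ := by
    intro t ht
    rw [abs_le] at ht
    have htR : 0 ≤ t + R := by linarith
    have h2δ : 0 < 2 * δ := by linarith
    have hdiv0 : 0 ≤ (t + R) / (2 * δ) := div_nonneg htR (by linarith)
    have hk_le : (⌊(t + R) / (2 * δ)⌋₊ : ℝ) ≤ R / δ := by
      calc (⌊(t + R) / (2 * δ)⌋₊ : ℝ) ≤ (t + R) / (2 * δ) := Nat.floor_le hdiv0
        _ ≤ (2 * R) / (2 * δ) := by gcongr; linarith
        _ = R / δ := by field_simp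
    have hkm : ⌊(t + R) / (2 * δ)⌋₊ ≤ m - 1 := by
      have h1 : (⌊(t + R) / (2 * δ)⌋₊ : ℝ) ≤ (⌈R / δ⌉₊ : ℝ) := hk_le.trans (Nat.le_ceil _)
      have h2 : ⌊(t + R) / (2 * δ)⌋₊ ≤ ⌈R / δ⌉₊ := Nat.cast_le.mp h1
      omega
    have hre : ridx t = ⌊(t + R) / (2 * δ)⌋₊ := by
      simp only [hridxdef]; exact min_eq_left hkm
    set k : ℕ := ⌊(t + R) / (2 * δ)⌋₊ with hkdef
    clear_value k
    have hfl : (k : ℝ) * (2 * δ) ≤ t + R := by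
      have h1 : (k : ℝ) ≤ (t + R) / (2 * δ) := hkdef ▸ Nat.floor_le hdiv0
      calc (k : ℝ) * (2 * δ) ≤ ((t + R) / (2 * δ)) * (2 * δ) := by nlinarith
        _ = t + R := by field_simp
    have hfu : t + R < ((k : ℝ) + 1) * (2 * δ) := by
      have h1 : (t + R) / (2 * δ) < (k : ℝ) + 1 := hkdef ▸ Nat.lt_floor_add_one ((t + R) / (2 * δ))
      calc t + R = ((t + R) / (2 * δ)) * (2 * δ) := by field_simp
        _ < ((k : ℝ) + 1) * (2 * δ) := by nlinarith
    rw [hre]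
    rcases le_or_gt (-R + (2 * (k:ℝ) + 1) * δ) R with hc | hc
    · simp only [hpdef]
      rw [min_eq_left hc, abs_le]
      constructor <;> nlinarith
    · simp only [hpdef]
      rw [min_eq_right hc.le, abs_le]
      constructor <;> nlinarith
  -- the index type
  let I : Type := (l : Fin (K + 1)) →
    ((Fin (a ((l:ℕ) + 1)) → Fin (a (l:ℕ)) → Fin m) × (Fin (a ((l:ℕ) + 1)) → Fin m))
  let eI : I ≃ Fin (Fintype.card I) := Fintype.equivFin I
  let cp : I → ∀ l : ℕ, Matrix (Fin (a (l + 1))) (Fin (a l)) ℝ × (Fin (a (l + 1)) → ℝ) :=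
    fun f l =>
      if h : l < K + 1 then
        (Matrix.of fun i i' => p ((f ⟨l, h⟩).1 i i'), fun i => p ((f ⟨l, h⟩).2 i))
      else 0
  have hcpeq : ∀ (g : I) (l : ℕ) (hl : l < K + 1),
      cp g l = ((Matrix.of fun i i' => p ((g ⟨l, hl⟩).1 i i')),
        fun i => p ((g ⟨l, hl⟩).2 i)) := fun g l hl => dif_pos hl
  have hcpR : ∀ f : I, ∀ l, l < K + 1 →
      (∀ i i', |(cp f l).1 i i'| ≤ R) ∧ (∀ i, |(cp f l).2 i| ≤ R) := by
    intro f l hl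
    rw [hcpeq f l hl]
    exact ⟨fun i i' => hpabs _, fun i => hpabs _⟩
  refine ⟨Fintype.card I, fun j => cp (eI.symm j), ?_, ?_, ?_⟩
  · intro j l hl
    exact hcpR _ l (by omega)
  · -- approximation property
    intro θ hθ
    let f : I := fun l =>
      (fun i i' => ⟨ridx ((θ (l:ℕ)).1 i i'), hridx_lt _⟩,
       fun i => ⟨ridx ((θ (l:ℕ)).2 i), hridx_lt _⟩)
    refine ⟨eI f, ?_⟩
    intro x hx
    simp only [Equiv.symm_apply_apply]
    have hxB : ∀ i, |x i| ≤ B := by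
      intro i
      obtain ⟨h1, h2⟩ := hx i
      rw [abs_le]
      constructor
      · have : |u| ≤ B := by
          rw [hBdef]; exact (le_max_left _ _).trans (le_max_right _ _)
        have := neg_abs_le u
        linarith
      · have : |v| ≤ B := by
          rw [hBdef]; exact (le_max_right _ _).trans (le_max_right _ _)
        have := le_abs_self v
        linarith
    have hcδ : ∀ l, l < K + 1 →
        (∀ i i', |(θ l).1 i i' - (cp f l).1 i i'| ≤ δ) ∧
        (∀ i, |(θ l).2 i - (cp f l).2 i| ≤ δ) := by
      intro l hl
      have hθl := hθ l (by omega)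
      rw [hcpeq f l hl]
      exact ⟨fun i i' => hgrid _ (hθl.1 i i'), fun i => hgrid _ (hθl.2 i)⟩
    have hbund : ∀ l, l < K + 1 → (a l : ℝ) ≤ W
        ∧ (∀ i i', |(θ l).1 i i'| ≤ R) ∧ (∀ i, |(θ l).2 i| ≤ R)
        ∧ (∀ i i', |(cp f l).1 i i'| ≤ R) ∧ (∀ i, |(cp f l).2 i| ≤ R)
        ∧ (∀ i i', |(θ l).1 i i' - (cp f l).1 i i'| ≤ δ)
        ∧ (∀ i, |(θ l).2 i - (cp f l).2 i| ≤ δ) := by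
      intro l hl
      have hθl := hθ l (by omega)
      have hcl := hcpR f l hl
      have hdl := hcδ l hl
      exact ⟨haW l (by omega), hθl.1, hθl.2, hcl.1, hcl.2, hdl.1, hdl.2⟩
    have hd := reluHid_diff_bound a θ (cp f) R W B δ hR hW hB hδpos.le x hxB K
      (fun l hl => hbund l (by omega))
    have hmag' := reluHid_abs_bound a (cp f) R W B hR hW hB x hxB K
      (fun l hl => ⟨(hbund l (by omega)).1, (hbund l (by omega)).2.2.2.1,
        (hbund l (by omega)).2.2.2.2.1⟩)
    have hbK := hbund K (by omega)
    have hG : 0 ≤ δ * (K : ℝ) * (R * W) ^ K * (B + K) :=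
      mul_nonneg (mul_nonneg (mul_nonneg hδpos.le hK0) (by linarith)) (by linarith)
    have hM : 0 ≤ (R * W) ^ K * (B + (K:ℝ)) := mul_nonneg (by linarith) (by linarith)
    have hout : ∀ i, |reluRealize a θ K x i - reluRealize a (cp f) K x i| ≤ r := by
      intro i
      have key := affine_diff_bound (θ K).1 (cp f K).1 (θ K).2 (cp f K).2
        (reluHid a θ K x) (reluHid a (cp f) K x) R W δ
        (δ * (K : ℝ) * (R * W) ^ K * (B + K)) ((R * W) ^ K * (B + K))
        (by linarith) hG hδpos.le hM hbK.2.1 hd hmag' hbK.2.2.2.2.2.1 hbK.2.2.2.2.2.2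
        (haW K (by omega)) i
      have step := relu_step_arith R W B δ K hR hW hB hδpos.le
      have hRr : δ * ((K:ℝ) + 1) * (R * W) ^ (K + 1) * (B + (K:ℝ) + 1) = R * r := by
        rw [hδdef, hQdef, pow_succ]
        field_simp
        ring
      have hchain : R * |reluRealize a θ K x i - reluRealize a (cp f) K x i| ≤ R * r := by
        calc R * |reluRealize a θ K x i - reluRealize a (cp f) K x i|
            ≤ R * (W * (δ * (K : ℝ) * (R * W) ^ K * (B + K)
                + δ * ((R * W) ^ K * (B + K))) + δ) :=
              mul_le_mul_of_nonneg_left key (by linarith)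
          _ ≤ δ * ((K:ℝ) + 1) * (R * W) ^ (K + 1) * (B + (K:ℝ) + 1) := step
          _ = R * r := hRr
      exact le_of_mul_le_mul_left hchain (by linarith)
    exact ⟨hout, fun i => (clip_lip D (by linarith) _ _).trans (hout i)⟩
  · -- the cardinality bound
    have hcard : Fintype.card I
        = m ^ (∑ l ∈ Finset.range (K + 1), (a (l + 1) * a l + a (l + 1))) := by
      rw [show Fintype.card I = ∏ l : Fin (K + 1),
          Fintype.card ((Fin (a ((l:ℕ) + 1)) → Fin (a (l:ℕ)) → Fin m)
            × (Fin (a ((l:ℕ) + 1)) → Fin m)) from Fintype.card_pi]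
      have hcl : ∀ l : Fin (K + 1),
          Fintype.card ((Fin (a ((l:ℕ) + 1)) → Fin (a (l:ℕ)) → Fin m)
            × (Fin (a ((l:ℕ) + 1)) → Fin m))
          = m ^ (a ((l:ℕ) + 1) * a (l:ℕ) + a ((l:ℕ) + 1)) := by
        intro l
        rw [Fintype.card_prod, Fintype.card_fun, Fintype.card_fun, Fintype.card_fun,
          Fintype.card_fin, Fintype.card_fin, Fintype.card_fin, ← pow_mul, ← pow_add]
        ring_nf
      rw [Finset.prod_congr rfl (fun l _ => hcl l), Finset.prod_pow_eq_pow_sum,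
        ← Fin.sum_univ_eq_sum_range (fun l => a (l + 1) * a l + a (l + 1)) (K + 1)]
    have hmpos : 0 < m := by omega
    have hT : (m : ℝ) ≤ 4 * ((K:ℝ) + 1) ^ 2 * B * (R * W) ^ (K + 1) / r := by
      have h1 : (m : ℝ) < R / δ + 2 := by
        rw [hmdef]
        push_cast
        have := Nat.ceil_lt_add_one (show (0:ℝ) ≤ R / δ by
          exact le_of_lt (div_pos (by linarith) hδpos))
        linarith
      have h2 : R / δ = R * Q / r := by
        rw [hδdef]
        field_simp
      have hpoly : (((K:ℝ) + 1) * (B + ((K:ℝ) + 1)) + 2) ≤ 4 * ((K:ℝ) + 1) ^ 2 * B := by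
        nlinarith [mul_nonneg (sub_nonneg.mpr hB) (sq_nonneg ((K:ℝ) + 1)),
          mul_nonneg (sub_nonneg.mpr hB) (by linarith : (0:ℝ) ≤ (K:ℝ) + 1),
          sq_nonneg (K:ℝ), hK0]
      have h3 : R * Q = ((K:ℝ) + 1) * (R * W) ^ (K + 1) * (B + ((K:ℝ) + 1)) := by
        rw [hQdef, pow_succ]
        ring
      have h4 : R * Q + 2 * r ≤ 4 * ((K:ℝ) + 1) ^ 2 * B * (R * W) ^ (K + 1) := by
        rw [h3]
        nlinarith [mul_le_mul_of_nonneg_right hpoly (by linarith : (0:ℝ) ≤ (R * W) ^ (K + 1))]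
      have h5 : R * Q / r + 2 ≤ 4 * ((K:ℝ) + 1) ^ 2 * B * (R * W) ^ (K + 1) / r := by
        rw [div_add' _ _ _ (ne_of_gt hr0), div_le_div_iff₀ hr0 hr0]
        nlinarith
      linarith [h2 ▸ h1]
    have hTpos : (0:ℝ) < 4 * ((K:ℝ) + 1) ^ 2 * B * (R * W) ^ (K + 1) / r := by
      apply div_pos _ hr0
      apply mul_pos _ (by linarith : (0:ℝ) < (R * W) ^ (K + 1))
      nlinarith
    have hlogm : Real.log (m : ℝ)
        ≤ Real.log (4 * ((K:ℝ) + 1) ^ 2 * B * (R * W) ^ (K + 1) / r) := by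
      apply Real.log_le_log (by exact_mod_cast hmpos) hT
    have hsplit : Real.log (4 * ((K:ℝ) + 1) ^ 2 * B * (R * W) ^ (K + 1) / r)
        = Real.log (4 * ((K:ℝ) + 1) ^ 2 * B / r) + ((K:ℝ) + 1) * Real.log (R * W) := by
      rw [show 4 * ((K:ℝ) + 1) ^ 2 * B * (R * W) ^ (K + 1) / r
          = (4 * ((K:ℝ) + 1) ^ 2 * B / r) * (R * W) ^ (K + 1) by ring,
        Real.log_mul (by positivity) (by positivity), Real.log_pow]
      push_cast
      ring
    have hPcast : (∑ l ∈ Finset.range (K + 1), ((a (l + 1) * a l + a (l + 1) : ℕ) : ℝ))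
        = ((∑ l ∈ Finset.range (K + 1), (a (l + 1) * a l + a (l + 1)) : ℕ) : ℝ) := by
      push_cast
      rfl
    rw [hPcast]
    calc Real.log (Fintype.card I)
        = Real.log ((m : ℝ) ^ (∑ l ∈ Finset.range (K + 1), (a (l + 1) * a l + a (l + 1)))) := by
          rw [hcard]; push_cast; ring_nf
      _ = ((∑ l ∈ Finset.range (K + 1), (a (l + 1) * a l + a (l + 1)) : ℕ) : ℝ)
            * Real.log (m : ℝ) := by rw [Real.log_pow]
      _ ≤ ((∑ l ∈ Finset.range (K + 1), (a (l + 1) * a l + a (l + 1)) : ℕ) : ℝ)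
            * (Real.log (4 * ((K:ℝ) + 1) ^ 2 * B / r) + ((K:ℝ) + 1) * Real.log (R * W)) := by
          apply mul_le_mul_of_nonneg_left _ (Nat.cast_nonneg _)
          rw [← hsplit]
          exact hlogm
end
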